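/- Let Z be the Randers norm with Zermelo data (⟨·,·⟩, W) on a finite-dimensional real inner product space V, where ‖W‖ < 1. Then for every v ≠ 0 and every u ∈ V, the Fréchet derivative of Z at v satisfies dZ_v(u) = ⟨v − Z(v)W, u⟩ / (Z(v) + ⟨v − Z(v)W, W⟩), where the denominator Z(v) + ⟨v − Z(v)W, W⟩ is strictly positive; consequently the fundamental tensor satisfies g_v(v,u) = Z(v)·⟨v − Z(v)W, u⟩ / (Z(v) + ⟨v − Z(v)W, W⟩). -/

import Mathlib

open scoped RealInnerProductSpace
open Classical

/-- The Randers norm with Zermelo data `(⟪·,·⟫, W)` on a real inner product space: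
`Z(0) = 0` and, for `v ≠ 0`,
`Z(v) = (√(⟪W,v⟫² + (1 − ‖W‖²)‖v‖²) − ⟪W,v⟫)/(1 − ‖W‖²)`. -/
noncomputable def randers {V : Type*} [NormedAddCommGroup V] [InnerProductSpace ℝ V]
    (W : V) (v : V) : ℝ :=
  if v = 0 then 0
  else (Real.sqrt (⟪W, v⟫ ^ 2 + (1 - ‖W‖ ^ 2) * ‖v‖ ^ 2) - ⟪W, v⟫) / (1 - ‖W‖ ^ 2)

/-- The fundamental tensor of a (Minkowski) norm `F` at the point `v`, evaluated on the
pair of vectors `(u, w)`: one half of the second Fréchet derivative of `F²` at `v`. -/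
noncomputable def fundamentalTensor {V : Type*} [NormedAddCommGroup V] [NormedSpace ℝ V]
    (F : V → ℝ) (v u w : V) : ℝ :=
  (1 / 2) * iteratedFDeriv ℝ 2 (fun x => F x ^ 2) v ![u, w]

/-!
The Randers norm `Z` is smooth away from `0` and satisfies `‖v - Z(v) W‖ = Z(v)`. Differentiating
the squared identity gives `dZ_v(u) * (Z(v) + ⟪v - Z(v) W, W⟫) = ⟪v - Z(v) W, u⟫`, and by
Cauchy–Schwarz the bracket is at least `Z(v) (1 - ‖W‖) > 0`. Since `Z` is positively homogeneous,
`Z²` is positively 2-homogeneous, so Euler's relation for its differential gives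
`d²(Z²)_v(v, u) = d(Z²)_v(u) = 2 Z(v) dZ_v(u)`.
-/

section Homogeneous

variable {E F : Type*} [NormedAddCommGroup E] [NormedSpace ℝ E]
  [NormedAddCommGroup F] [NormedSpace ℝ F] {f : E → F} {k : ℕ}
  (hf : ∀ t : ℝ, 0 < t → ∀ x, f (t • x) = t ^ k • f x)
include hf

theorem smul_fderiv_smul_of_homogeneous {t : ℝ} (ht : 0 < t) (x : E) :
    t • fderiv ℝ f (t • x) = t ^ k • fderiv ℝ f x := by
  have hcomp : (fun y => f (t • y)) = t ^ k • f := funext (hf t ht)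
  rw [← fderiv_comp_smul, hcomp, fderiv_const_smul_field]
  rfl

theorem fderiv_fderiv_apply_self_of_homogeneous {x : E} (hd : DifferentiableAt ℝ (fderiv ℝ f) x) :
    fderiv ℝ (fderiv ℝ f) x x = ((k : ℝ) - 1) • fderiv ℝ f x := by
  have hray : HasDerivAt (fun t : ℝ => t • x) x 1 := by
    simpa using (hasDerivAt_id (1 : ℝ)).smul_const x
  have hd' : HasFDerivAt (fderiv ℝ f) (fderiv ℝ (fderiv ℝ f) x) ((1 : ℝ) • x) := by
    rw [one_smul]; exact hd.hasFDerivAt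
  have hprod : HasDerivAt (fun t : ℝ => t • fderiv ℝ f (t • x))
      (fderiv ℝ (fderiv ℝ f) x x + fderiv ℝ f x) 1 := by
    simpa using (hasDerivAt_id (1 : ℝ)).fun_smul (hd'.comp_hasDerivAt 1 hray)
  have hpow : HasDerivAt (fun t : ℝ => t • fderiv ℝ f (t • x)) ((k : ℝ) • fderiv ℝ f x) 1 := by
    refine ((hasDerivAt_pow k (1 : ℝ)).smul_const (fderiv ℝ f x)).congr_of_eventuallyEq ?_
      |>.congr_deriv (by simp)
    filter_upwards [eventually_gt_nhds one_pos] with t ht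
    exact smul_fderiv_smul_of_homogeneous hf ht x
  rw [sub_smul, one_smul, ← hprod.unique hpow, add_sub_cancel_right]

end Homogeneous

theorem fundamentalTensor_self_left {E : Type*} [NormedAddCommGroup E] [NormedSpace ℝ E]
    {F : E → ℝ} (hF : ∀ t : ℝ, 0 < t → ∀ x, F (t • x) = t * F x)
    {v : E} (hv : ContDiffAt ℝ 2 F v) (u : E) :
    fundamentalTensor F v v u = F v * fderiv ℝ F v u := by
  have hsq : ∀ t : ℝ, 0 < t → ∀ x, F (t • x) ^ 2 = t ^ 2 • F x ^ 2 := fun t ht x => by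
    rw [hF t ht, smul_eq_mul, mul_pow]
  have hdd : DifferentiableAt ℝ (fderiv ℝ fun x => F x ^ 2) v :=
    ((hv.pow 2).fderiv_right (m := 1) le_rfl).differentiableAt one_ne_zero
  have hder : fderiv ℝ (fun x => F x ^ 2) v = (2 * F v) • fderiv ℝ F v := by
    simpa using ((hv.differentiableAt two_ne_zero).hasFDerivAt.pow 2).fderiv
  rw [fundamentalTensor, iteratedFDeriv_two_apply, Matrix.cons_val_zero, Matrix.cons_val_one,
    fderiv_fderiv_apply_self_of_homogeneous hsq hdd, hder]
  simp only [one_div, Nat.cast_ofNat, Matrix.cons_val_fin_one, smul_apply, smul_eq_mul]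
  ring

section Randers

variable {V : Type*} [NormedAddCommGroup V] [InnerProductSpace ℝ V] {W : V}

theorem randers_of_ne_zero {v : V} (hv : v ≠ 0) :
    randers W v =
      (√(⟪W, v⟫ ^ 2 + (1 - ‖W‖ ^ 2) * ‖v‖ ^ 2) - ⟪W, v⟫) / (1 - ‖W‖ ^ 2) :=
  if_neg hv

theorem randers_smul {t : ℝ} (ht : 0 ≤ t) (v : V) : randers W (t • v) = t * randers W v := by
  rcases ht.eq_or_lt with rfl | ht
  · simp [randers]
  rcases eq_or_ne v 0 with rfl | hv
  · simp [randers]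
  rw [randers_of_ne_zero hv, randers_of_ne_zero (smul_ne_zero ht.ne' hv), real_inner_smul_right,
    norm_smul, Real.norm_of_nonneg ht.le,
    show (t * ⟪W, v⟫) ^ 2 + (1 - ‖W‖ ^ 2) * (t * ‖v‖) ^ 2
      = t ^ 2 * (⟪W, v⟫ ^ 2 + (1 - ‖W‖ ^ 2) * ‖v‖ ^ 2) by ring,
    Real.sqrt_mul (sq_nonneg t), Real.sqrt_sq ht.le]
  ring

variable (hW : ‖W‖ < 1)
include hW

theorem randers_radicand_pos {v : V} (hv : v ≠ 0) :
    0 < ⟪W, v⟫ ^ 2 + (1 - ‖W‖ ^ 2) * ‖v‖ ^ 2 := by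
  have hc : 0 < 1 - ‖W‖ ^ 2 := sub_pos.2 (pow_lt_one₀ (norm_nonneg W) hW two_ne_zero)
  have := norm_pos_iff.mpr hv
  positivity

theorem contDiffAt_randers {v : V} (hv : v ≠ 0) {n : WithTop ℕ∞} :
    ContDiffAt ℝ n (randers W) v := by
  have hformula : ContDiffAt ℝ n
      (fun x => (√(⟪W, x⟫ ^ 2 + (1 - ‖W‖ ^ 2) * ‖x‖ ^ 2) - ⟪W, x⟫) / (1 - ‖W‖ ^ 2)) v := by
    have hinner : ContDiff ℝ n fun x : V => ⟪W, x⟫ := contDiff_const.inner ℝ contDiff_id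
    have hrad : ContDiffAt ℝ n (fun x => ⟪W, x⟫ ^ 2 + (1 - ‖W‖ ^ 2) * ‖x‖ ^ 2) v :=
      ((hinner.pow 2).add (contDiff_const.mul (contDiff_norm_sq ℝ))).contDiffAt
    exact ((hrad.sqrt (randers_radicand_pos hW hv).ne').sub hinner.contDiffAt).div_const _
  refine hformula.congr_of_eventuallyEq ?_
  filter_upwards [eventually_ne_nhds hv] with x hx
  exact randers_of_ne_zero hx

theorem randers_pos {v : V} (hv : v ≠ 0) : 0 < randers W v := by
  have hc : 0 < 1 - ‖W‖ ^ 2 := sub_pos.2 (pow_lt_one₀ (norm_nonneg W) hW two_ne_zero)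
  rw [randers_of_ne_zero hv]
  refine div_pos (sub_pos.2 (Real.lt_sqrt_of_sq_lt ?_)) hc
  linarith [mul_pos hc (pow_pos (norm_pos_iff.mpr hv) 2)]

theorem norm_sub_randers_smul (v : V) : ‖v - randers W v • W‖ = randers W v := by
  rcases eq_or_ne v 0 with rfl | hv
  · simp [randers]
  refine (sq_eq_sq₀ (norm_nonneg _) (randers_pos hW hv).le).mp ?_
  have hc := sub_pos.2 (pow_lt_one₀ (norm_nonneg W) hW two_ne_zero)
  have hS := Real.sq_sqrt (randers_radicand_pos hW hv).le
  rw [norm_sub_sq_real, real_inner_smul_right, norm_smul, Real.norm_eq_abs, mul_pow, sq_abs,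
    real_inner_comm, randers_of_ne_zero hv]
  set S := √(⟪W, v⟫ ^ 2 + (1 - ‖W‖ ^ 2) * ‖v‖ ^ 2)
  field_simp
  linear_combination (‖W‖ ^ 2 - 1) * hS

theorem randers_add_inner_pos {v : V} (hv : v ≠ 0) :
    0 < randers W v + ⟪v - randers W v • W, W⟫ := by
  have hCS := neg_le_of_abs_le (abs_real_inner_le_norm (v - randers W v • W) W)
  rw [norm_sub_randers_smul hW] at hCS
  nlinarith [randers_pos hW hv]

theorem fderiv_randers_mul {v : V} (hd : DifferentiableAt ℝ (randers W) v) (u : V) :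
    fderiv ℝ (randers W) v u * (randers W v + ⟪v - randers W v • W, W⟫) =
      ⟪v - randers W v • W, u⟫ := by
  have hid : (fun x => ‖x - randers W x • W‖ ^ 2) = fun x => randers W x ^ 2 :=
    funext fun x => by rw [norm_sub_randers_smul hW]
  have hnorm : HasFDerivAt (fun x => randers W x ^ 2)
      (2 • (innerSL ℝ (v - randers W v • W)).comp
        (ContinuousLinearMap.id ℝ V - (fderiv ℝ (randers W) v).smulRight W)) v :=
    hid ▸ ((hasFDerivAt_id v).sub (hd.hasFDerivAt.smul_const W)).norm_sq
  have := congrArg (· u) (hnorm.unique (hd.hasFDerivAt.pow 2))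
  simp only [map_sub, map_smul, ContinuousLinearMap.comp_sub, ContinuousLinearMap.comp_id,
    ContinuousLinearMap.sub_comp, ContinuousLinearMap.smul_comp, smul_apply, sub_apply,
    coe_innerSL_apply, smul_eq_mul, ContinuousLinearMap.comp_apply,
    ContinuousLinearMap.smulRight_apply, inner_self_eq_norm_sq_to_K, Real.ringHom_apply,
    nsmul_eq_mul, Nat.cast_ofNat, Nat.add_one_sub_one, pow_one] at this
  rw [inner_sub_left, inner_sub_left, real_inner_smul_left, real_inner_smul_left,
    real_inner_self_eq_norm_sq]
  linear_combination (-1 / 2 : ℝ) * this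

end Randers

theorem randers_fderiv_and_fundamentalTensor_general {V : Type*} [NormedAddCommGroup V]
    [InnerProductSpace ℝ V] (W : V) (hW : ‖W‖ < 1)
    (v : V) (hv : v ≠ 0) (u : V) :
    0 < randers W v + ⟪v - randers W v • W, W⟫ ∧
      fderiv ℝ (randers W) v u =
        ⟪v - randers W v • W, u⟫ / (randers W v + ⟪v - randers W v • W, W⟫) ∧
      fundamentalTensor (randers W) v v u =
        randers W v * ⟪v - randers W v • W, u⟫ / (randers W v + ⟪v - randers W v • W, W⟫) := by
  have hsmooth : ContDiffAt ℝ 2 (randers W) v := contDiffAt_randers hW hv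
  have hpos := randers_add_inner_pos hW hv
  have hfderiv := eq_div_of_mul_eq hpos.ne'
    (fderiv_randers_mul hW (hsmooth.differentiableAt two_ne_zero) u)
  refine ⟨hpos, hfderiv, ?_⟩
  rw [fundamentalTensor_self_left (fun t ht x => randers_smul ht.le x) hsmooth, hfderiv,
    mul_div_assoc]

/-- Derivative of the Randers norm: for `v ≠ 0`,
`dZ_v(u) = ⟪v − Z(v)W, u⟫ / (Z(v) + ⟪v − Z(v)W, W⟫)` with strictly positive denominator,
and consequently `g_v(v,u) = Z(v)·⟪v − Z(v)W, u⟫ / (Z(v) + ⟪v − Z(v)W, W⟫)`. -/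
theorem randers_fderiv_and_fundamentalTensor {V : Type*} [NormedAddCommGroup V]
    [InnerProductSpace ℝ V] [FiniteDimensional ℝ V] (W : V) (hW : ‖W‖ < 1)
    (v : V) (hv : v ≠ 0) (u : V) :
    0 < randers W v + ⟪v - randers W v • W, W⟫ ∧
      fderiv ℝ (randers W) v u =
        ⟪v - randers W v • W, u⟫ / (randers W v + ⟪v - randers W v • W, W⟫) ∧
      fundamentalTensor (randers W) v v u =
        randers W v * ⟪v - randers W v • W, u⟫ / (randers W v + ⟪v - randers W v • W, W⟫) :=
  randers_fderiv_and_fundamentalTensor_general W hW v hv u
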